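/- Fix 0 < V̄ < 1 and α ∈ (0,1). (a) If 0 < α < 1/2 and V̄ ≥ L(α), then the mass polynomial 𝒫_α has exactly two zeros h_l ≤ h_L in (1, ∞) counted with multiplicity, and these satisfy 1 < h_l ≤ ((1/α) − 1)^{1/4} ≤ h_L; moreover h_l = ((1/α) − 1)^{1/4} = h_L if V̄ = L(α), while h_l < ((1/α) − 1)^{1/4} < h_L if V̄ > L(α). (b) If 1/2 ≤ α < 1, or if V̄ < L(α), then 𝒫_α has no zero in (1, ∞). -/

import Mathlib

open Polynomial

/-- The mass polynomial 𝒫_α as a polynomial over ℝ: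
𝒫_α = α X^6 + 3α X^4 − 4V̄ X^3 + 3(1−α) X^2 + (1−α). -/
noncomputable def massP (Vbar α : ℝ) : Polynomial ℝ :=
  C α * X ^ 6 + C (3 * α) * X ^ 4 - C (4 * Vbar) * X ^ 3 + C (3 * (1 - α)) * X ^ 2 + C (1 - α)

/-- The limiting function L(α) = α^{3/4}(1−α)^{1/4} + α^{1/4}(1−α)^{3/4}. -/
noncomputable def Lfun (α : ℝ) : ℝ :=
  α ^ ((3 : ℝ) / 4) * (1 - α) ^ ((1 : ℝ) / 4) + α ^ ((1 : ℝ) / 4) * (1 - α) ^ ((3 : ℝ) / 4)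

/-! For h > 0 the zeros of 𝒫_α are those of g(h) = 𝒫_α(h) / h³ (`massRatio`). Let c > 0 with
α c⁴ = 1 − α, i.e. c = (1/α − 1)^{1/4}. Factoring x³y³(g(y) − g(x)) by y − x shows that g
strictly decreases on (0, c] and strictly increases on [c, ∞).
Since g(1) = 4(1 − V̄), g(c) = 4(α(c + c³) − V̄) = 4(L(α) − V̄), g → ∞, and c > 1 iff α < 1/2,
the intermediate value theorem locates the zeros in (1, ∞). Multiplicities come from
h 𝒫'(h) − 3 𝒫(h) = 3α(h² + 1)(h⁴ − c⁴): zeros other than c are simple, and c is a double zero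
when V̄ = L(α). -/

open Set Filter

theorem Polynomial.rootMultiplicity_eq_of_isRoot_iterate_derivative {R : Type*} [CommRing R]
    [IsDomain R] [CharZero R] {p : R[X]} {t : R} {n : ℕ} (hp : p ≠ 0)
    (hroot : ∀ m < n, (derivative^[m] p).IsRoot t) (hn : ¬ (derivative^[n] p).IsRoot t) :
    p.rootMultiplicity t = n := by
  refine le_antisymm
    (not_lt.mp fun hlt => hn (isRoot_iterate_derivative_of_lt_rootMultiplicity hlt)) ?_
  rcases n with _ | n
  · exact Nat.zero_le _
  · exact (lt_rootMultiplicity_iff_isRoot_iterate_derivative hp).mpr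
      fun m hm => hroot m (Nat.lt_succ_of_le hm)

theorem Polynomial.filter_roots_eq_of_rootMultiplicity {R : Type*} [CommRing R] [IsDomain R]
    [DecidableEq R] {p : R[X]} {q : R → Prop} [DecidablePred q] {s : Multiset R}
    (hs : ∀ x ∈ s, q x) (hmult : ∀ x, q x → p.rootMultiplicity x = s.count x) :
    p.roots.filter q = s := by
  ext x
  rw [Multiset.count_filter]
  split_ifs with hx
  · rw [count_roots, hmult x hx]
  · exact (Multiset.count_eq_zero.mpr fun hxs => hx (hs x hxs)).symm

lemma eval_massP (V α x : ℝ) :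
    (massP V α).eval x
      = α * x^6 + 3 * α * x^4 - 4 * V * x^3 + 3 * (1 - α) * x^2 + (1 - α) := by
  simp [massP]

lemma eval_derivative_massP (V α x : ℝ) :
    (derivative (massP V α)).eval x
      = 6 * α * x^5 + 12 * α * x^3 - 12 * V * x^2 + 6 * (1 - α) * x := by
  simp only [massP, derivative_add, derivative_sub, derivative_C_mul_X_pow, derivative_C,
    eval_add, eval_sub, eval_mul, eval_C, eval_pow, eval_X, eval_zero]
  ring

lemma eval_derivative_derivative_massP (V α x : ℝ) :
    (derivative (derivative (massP V α))).eval x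
      = 30 * α * x^4 + 36 * α * x^2 - 24 * V * x + 6 * (1 - α) := by
  simp only [massP, derivative_add, derivative_sub, derivative_C_mul_X_pow, derivative_C,
    derivative_zero, eval_add, eval_sub, eval_mul, eval_C, eval_pow, eval_X, eval_zero]
  ring

lemma natDegree_massP (V : ℝ) {α : ℝ} (hα : α ≠ 0) : (massP V α).natDegree = 6 := by
  unfold massP; compute_degree!

lemma leadingCoeff_massP (V : ℝ) {α : ℝ} (hα : α ≠ 0) :
    (massP V α).leadingCoeff = α := by
  rw [leadingCoeff, natDegree_massP V hα]
  simp only [massP, coeff_add, coeff_sub, coeff_C_mul, coeff_X_pow, coeff_C]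
  norm_num

lemma massP_ne_zero (V : ℝ) {α : ℝ} (hα : α ≠ 0) : massP V α ≠ 0 :=
  leadingCoeff_ne_zero.mp (by rwa [leadingCoeff_massP V hα])

lemma tendsto_eval_massP (V : ℝ) {α : ℝ} (hα : 0 < α) :
    Tendsto (fun x => (massP V α).eval x) atTop atTop := by
  refine tendsto_atTop_of_leadingCoeff_nonneg _ ?_
    (by rw [leadingCoeff_massP V hα.ne']; exact hα.le)
  rw [degree_eq_natDegree (massP_ne_zero V hα.ne'), natDegree_massP V hα.ne']
  norm_num

lemma eval_massP_mul_sub (V α x y : ℝ) :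
    (massP V α).eval y * x^3 - (massP V α).eval x * y^3
      = (y - x) * (α * x^3 * y^3 * (x^2 + x*y + y^2 + 3)
          - (1 - α) * (3 * x^2 * y^2 + x^2 + x*y + y^2)) := by
  simp only [eval_massP]; ring

noncomputable def massRatio (V α h : ℝ) : ℝ := (massP V α).eval h / h^3

lemma eval_massP_eq_mul_massRatio (V α : ℝ) {h : ℝ} (hh : h ≠ 0) :
    (massP V α).eval h = h^3 * massRatio V α h := by
  rw [massRatio]; field_simp

lemma massRatio_one (V α : ℝ) : massRatio V α 1 = 4 * (1 - V) := by
  rw [massRatio, eval_massP]; ring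

section Critical

variable {V α c : ℝ}

lemma strictAntiOn_massRatio (hα : 0 < α) (hc : α * c^4 = 1 - α) :
    StrictAntiOn (massRatio V α) (Ioc 0 c) := by
  rintro x ⟨hx, -⟩ y ⟨hy, hyc⟩ hxy
  have hy4 : α * y^4 ≤ 1 - α :=
    hc ▸ mul_le_mul_of_nonneg_left (pow_le_pow_left₀ hy.le hyc 4) hα.le
  have hpoly : x^3 * (x^2 + x*y + y^2 + 3) < y * (3 * x^2 * y^2 + x^2 + x*y + y^2) := by
    nlinarith [mul_pos hx hy, pow_lt_pow_left₀ hxy hx.le (by norm_num : 3 ≠ 0),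
      mul_pos (mul_pos hx hx) (sub_pos.2 hxy), mul_pos (mul_pos hx hy) (sub_pos.2 hxy)]
  have hneg :
      α * x^3 * y^3 * (x^2 + x*y + y^2 + 3) < (1 - α) * (3 * x^2 * y^2 + x^2 + x*y + y^2) := by
    calc α * x^3 * y^3 * (x^2 + x*y + y^2 + 3)
        < α * y^4 * (3 * x^2 * y^2 + x^2 + x*y + y^2) := by
          have := mul_lt_mul_of_pos_left hpoly (mul_pos hα (pow_pos hy 3))
          linarith
      _ ≤ (1 - α) * (3 * x^2 * y^2 + x^2 + x*y + y^2) :=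
          mul_le_mul_of_nonneg_right hy4 (by positivity)
  rw [massRatio, massRatio, div_lt_div_iff₀ (by positivity) (by positivity)]
  nlinarith [eval_massP_mul_sub V α x y, mul_pos (sub_pos.2 hxy) (sub_pos.2 hneg)]

lemma strictMonoOn_massRatio (hα : 0 < α) (hc : α * c^4 = 1 - α) (hc0 : 0 < c) :
    StrictMonoOn (massRatio V α) (Ici c) := by
  rintro x hcx y - hxy
  have hx : 0 < x := hc0.trans_le hcx
  have hy : 0 < y := hx.trans hxy
  have hx4 : 1 - α ≤ α * x^4 :=
    hc ▸ mul_le_mul_of_nonneg_left (pow_le_pow_left₀ hc0.le hcx 4) hα.le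
  have hpoly : x * (3 * x^2 * y^2 + x^2 + x*y + y^2) < y^3 * (x^2 + x*y + y^2 + 3) := by
    nlinarith [mul_pos hx hy, pow_lt_pow_left₀ hxy hx.le (by norm_num : 3 ≠ 0),
      mul_pos (mul_pos hx hx) (sub_pos.2 hxy), mul_pos (mul_pos hx hy) (sub_pos.2 hxy)]
  have hpos :
      (1 - α) * (3 * x^2 * y^2 + x^2 + x*y + y^2) < α * x^3 * y^3 * (x^2 + x*y + y^2 + 3) := by
    calc (1 - α) * (3 * x^2 * y^2 + x^2 + x*y + y^2)
        ≤ α * x^4 * (3 * x^2 * y^2 + x^2 + x*y + y^2) :=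
          mul_le_mul_of_nonneg_right hx4 (by positivity)
      _ < α * x^3 * y^3 * (x^2 + x*y + y^2 + 3) := by
          have := mul_lt_mul_of_pos_left hpoly (mul_pos hα (pow_pos hx 3))
          linarith
  rw [massRatio, massRatio, div_lt_div_iff₀ (by positivity) (by positivity)]
  nlinarith [eval_massP_mul_sub V α x y, mul_pos (sub_pos.2 hxy) (sub_pos.2 hpos)]

lemma massRatio_crit (hc : α * c^4 = 1 - α) (hc0 : 0 < c) :
    massRatio V α c = 4 * (α * (c + c^3) - V) := by
  rw [massRatio, eval_massP, div_eq_iff (by positivity)]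
  linear_combination (-(3 * c^2 + 1)) * hc

lemma massRatio_crit_lt (hα : 0 < α) (hc : α * c^4 = 1 - α) (hc0 : 0 < c) {h : ℝ} (hh : 0 < h)
    (hhc : h ≠ c) : massRatio V α c < massRatio V α h := by
  rcases hhc.lt_or_gt with hlt | hgt
  · exact strictAntiOn_massRatio hα hc ⟨hh, hlt.le⟩ ⟨hc0, le_rfl⟩ hlt
  · exact strictMonoOn_massRatio hα hc hc0 self_mem_Ici hgt.le hgt

lemma eval_derivative_massP_ne_zero (hα : 0 < α) (hc : α * c^4 = 1 - α) (hc0 : 0 < c) {z : ℝ}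
    (hz : 0 < z) (hzc : z ≠ c) (hroot : (massP V α).eval z = 0) :
    (derivative (massP V α)).eval z ≠ 0 := by
  intro hder
  have key : z * (derivative (massP V α)).eval z - 3 * (massP V α).eval z
      = 3 * α * (z^2 + 1) * (z^4 - c^4) := by
    rw [eval_derivative_massP, eval_massP]; linear_combination (3 * (z^2 + 1)) * hc
  have hpos : 0 < 3 * α * (z^2 + 1) := by positivity
  have hz4 : z^4 - c^4 = 0 :=
    (mul_eq_zero.mp (by rw [← key, hder, hroot]; ring)).resolve_left hpos.ne'
  exact hzc ((pow_left_inj₀ hz.le hc0.le (by norm_num)).mp (sub_eq_zero.mp hz4))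

lemma rootMultiplicity_massP_of_ne (hα : 0 < α) (hc : α * c^4 = 1 - α) (hc0 : 0 < c) {z : ℝ}
    (hz : 0 < z) (hzc : z ≠ c) (hroot : (massP V α).eval z = 0) :
    (massP V α).rootMultiplicity z = 1 :=
  rootMultiplicity_eq_of_isRoot_iterate_derivative (massP_ne_zero V hα.ne')
    (fun m hm => by rwa [Nat.lt_one_iff.mp hm])
    (eval_derivative_massP_ne_zero hα hc hc0 hz hzc hroot)

lemma rootMultiplicity_massP_crit (hα : 0 < α) (hc : α * c^4 = 1 - α) (hc0 : 0 < c)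
    (hV : V = α * (c + c^3)) : (massP V α).rootMultiplicity c = 2 := by
  refine rootMultiplicity_eq_of_isRoot_iterate_derivative (massP_ne_zero V hα.ne') ?_ ?_
  · intro m hm
    interval_cases m
    · simp only [Function.iterate_zero, id, IsRoot, eval_massP, hV]
      linear_combination (-(3 * c^2 + 1)) * hc
    · simp only [Function.iterate_one, IsRoot, eval_derivative_massP, hV]
      linear_combination (-6 * c) * hc
  · simp only [Function.iterate_succ, Function.iterate_zero, Function.comp_apply, id, IsRoot,
      eval_derivative_derivative_massP, hV]
    have h2 : 30 * α * c^4 + 36 * α * c^2 - 24 * (α * (c + c^3)) * c + 6 * (1 - α)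
        = 12 * α * c^2 * (c^2 + 1) := by
      linear_combination (-6) * hc
    rw [h2]
    positivity

lemma one_lt_iff_lt_half_of_mul_pow_four (hα : 0 < α) (hc : α * c^4 = 1 - α) (hc0 : 0 < c) :
    1 < c ↔ α < 1 / 2 := by
  rw [← one_lt_pow_iff_of_nonneg hc0.le (by norm_num : 4 ≠ 0)]
  constructor <;> intro h <;> nlinarith

lemma eval_massP_pos_of_lt (hα : 0 < α) (hc : α * c^4 = 1 - α) (hc0 : 0 < c)
    (hV : V < α * (c + c^3)) {h : ℝ} (hh : 0 < h) : 0 < (massP V α).eval h := by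
  have hmin : massRatio V α c ≤ massRatio V α h := by
    rcases eq_or_ne h c with rfl | hhc
    · exact le_rfl
    · exact (massRatio_crit_lt hα hc hc0 hh hhc).le
  have hcrit : 0 < massRatio V α c := by rw [massRatio_crit hc hc0]; linarith
  rw [eval_massP_eq_mul_massRatio V α hh.ne']
  exact mul_pos (pow_pos hh 3) (hcrit.trans_le hmin)

lemma eval_massP_pos_of_le_one (hα : 0 < α) (hc : α * c^4 = 1 - α) (hc0 : 0 < c) (hc1 : c ≤ 1)
    (hV1 : V < 1) {h : ℝ} (hh : 1 < h) : 0 < (massP V α).eval h := by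
  have hmono := strictMonoOn_massRatio (V := V) hα hc hc0 hc1 (hc1.trans hh.le) hh
  rw [massRatio_one] at hmono
  rw [eval_massP_eq_mul_massRatio V α (one_pos.trans hh).ne']
  exact mul_pos (pow_pos (one_pos.trans hh) 3) (by linarith)

lemma filter_roots_massP_of_eq (hα : 0 < α) (hc : α * c^4 = 1 - α) (hc1 : 1 < c)
    (hV : V = α * (c + c^3)) :
    (massP V α).roots.filter (fun x => 1 < x) = {c, c} := by
  have hc0 : 0 < c := one_pos.trans hc1
  refine filter_roots_eq_of_rootMultiplicity (by simp [hc1]) fun x hx => ?_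
  rcases eq_or_ne x c with rfl | hxc
  · rw [rootMultiplicity_massP_crit hα hc hc0 hV]; simp
  · have hx0 : 0 < x := one_pos.trans hx
    have hPx : (massP V α).eval x ≠ 0 := by
      have := massRatio_crit_lt (V := V) hα hc hc0 hx0 hxc
      rw [massRatio_crit hc hc0, ← hV, sub_self, mul_zero] at this
      rw [eval_massP_eq_mul_massRatio V α hx0.ne']
      exact (mul_pos (pow_pos hx0 3) this).ne'
    rw [rootMultiplicity_eq_zero hPx]; simp [hxc]

lemma exists_filter_roots_massP_of_lt (hα : 0 < α) (hc : α * c^4 = 1 - α) (hc1 : 1 < c)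
    (hV : α * (c + c^3) < V) (hV1 : V < 1) : ∃ hl hL : ℝ, 1 < hl ∧ hl < c ∧ c < hL ∧
      (massP V α).roots.filter (fun x => 1 < x) = {hl, hL} := by
  have hc0 : 0 < c := one_pos.trans hc1
  set P := massP V α
  have hP1 : 0 < P.eval 1 := by rw [eval_massP]; linarith
  have hPc : P.eval c < 0 := by
    rw [eval_massP_eq_mul_massRatio V α hc0.ne', massRatio_crit hc hc0]
    exact mul_neg_of_pos_of_neg (pow_pos hc0 3) (by linarith)
  obtain ⟨M, hPM, hcM⟩ :=
    (((tendsto_eval_massP V hα).eventually_gt_atTop 0).and (eventually_gt_atTop c)).exists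
  obtain ⟨hl, ⟨hl1, hlc⟩, hPl⟩ :=
    intermediate_value_Ioo' hc1.le P.continuous.continuousOn ⟨hPc, hP1⟩
  obtain ⟨hL, ⟨hcL, -⟩, hPL⟩ :=
    intermediate_value_Ioo hcM.le P.continuous.continuousOn ⟨hPc, hPM⟩
  have hratio : ∀ x, P.eval x = 0 → massRatio V α x = 0 := fun x hx => by
    rw [massRatio, hx, zero_div]
  have honly : ∀ x, 1 < x → P.eval x = 0 → x = hl ∨ x = hL := by
    intro x hx hPx
    rcases le_total x c with hxc | hcx
    · exact .inl <| (strictAntiOn_massRatio hα hc).injOn ⟨one_pos.trans hx, hxc⟩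
        ⟨one_pos.trans hl1, hlc.le⟩ (by rw [hratio x hPx, hratio hl hPl])
    · exact .inr <| (strictMonoOn_massRatio hα hc hc0).injOn hcx hcL.le
        (by rw [hratio x hPx, hratio hL hPL])
  have hlL : hl ≠ hL := (hlc.trans hcL).ne
  refine ⟨hl, hL, hl1, hlc, hcL, filter_roots_eq_of_rootMultiplicity ?_ fun x hx => ?_⟩
  · simp only [Multiset.insert_eq_cons, Multiset.mem_cons, Multiset.mem_singleton]
    rintro x (rfl | rfl) <;> linarith
  by_cases hPx : P.eval x = 0
  · rcases honly x hx hPx with rfl | rfl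
    · rw [rootMultiplicity_massP_of_ne hα hc hc0 (by linarith) hlc.ne hPx]; simp [hlL]
    · rw [rootMultiplicity_massP_of_ne hα hc hc0 (by linarith) hcL.ne' hPx]; simp [hlL.symm]
  · have hxl : x ≠ hl := by rintro rfl; exact hPx hPl
    have hxL : x ≠ hL := by rintro rfl; exact hPx hPL
    rw [rootMultiplicity_eq_zero hPx]; simp [hxl, hxL]

end Critical

noncomputable def critPoint (α : ℝ) : ℝ := (1 / α - 1) ^ ((1 : ℝ) / 4)

section CritPoint

variable {α : ℝ}

lemma rpow_quarter_pow_four {x : ℝ} (hx : 0 ≤ x) : (x ^ ((1 : ℝ) / 4)) ^ 4 = x := by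
  rw [← Real.rpow_natCast, ← Real.rpow_mul hx]; norm_num

lemma rpow_three_quarters {x : ℝ} (hx : 0 ≤ x) :
    x ^ ((3 : ℝ) / 4) = (x ^ ((1 : ℝ) / 4)) ^ 3 := by
  rw [← Real.rpow_natCast, ← Real.rpow_mul hx]; norm_num

lemma critPoint_eq_div (hα0 : 0 < α) (hα1 : α < 1) :
    critPoint α = (1 - α) ^ ((1 : ℝ) / 4) / α ^ ((1 : ℝ) / 4) := by
  rw [critPoint, ← Real.div_rpow (by linarith) hα0.le]
  congr 1; field_simp

lemma critPoint_pos (hα0 : 0 < α) (hα1 : α < 1) : 0 < critPoint α := by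
  rw [critPoint_eq_div hα0 hα1]
  exact div_pos (Real.rpow_pos_of_pos (by linarith) _) (Real.rpow_pos_of_pos hα0 _)

lemma mul_critPoint_pow_four (hα0 : 0 < α) (hα1 : α < 1) : α * critPoint α ^ 4 = 1 - α := by
  rw [critPoint_eq_div hα0 hα1, div_pow, rpow_quarter_pow_four hα0.le,
    rpow_quarter_pow_four (by linarith)]
  field_simp

lemma Lfun_eq_critPoint (hα0 : 0 < α) (hα1 : α < 1) :
    Lfun α = α * (critPoint α + critPoint α ^ 3) := by
  rw [Lfun, rpow_three_quarters hα0.le, rpow_three_quarters (by linarith),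
    critPoint_eq_div hα0 hα1]
  have ha0 : 0 < α ^ ((1 : ℝ) / 4) := Real.rpow_pos_of_pos hα0 _
  have ha4 := rpow_quarter_pow_four hα0.le
  set a := α ^ ((1 : ℝ) / 4)
  set b := (1 - α) ^ ((1 : ℝ) / 4)
  rw [← ha4]
  field_simp

end CritPoint

theorem stmt6_general (Vbar α : ℝ) (hV1 : Vbar < 1) (hα : α ∈ Set.Ioo (0 : ℝ) 1) :
    let R := (massP Vbar α).roots.filter (fun x => 1 < x)
    let c : ℝ := (1 / α - 1) ^ ((1 : ℝ) / 4)
    -- (a): for 0 < α < 1/2 and V̄ ≥ L(α), exactly two zeros in (1,∞), with multiplicity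
    (α < 1 / 2 → Lfun α ≤ Vbar →
      ∃ hl hL : ℝ, hl ≤ hL ∧ R = {hl, hL} ∧ 1 < hl ∧ hl ≤ c ∧ c ≤ hL ∧
        (Vbar = Lfun α → hl = c ∧ hL = c) ∧
        (Lfun α < Vbar → hl < c ∧ c < hL)) ∧
    -- (b): for 1/2 ≤ α < 1, or V̄ < L(α), no zero in (1,∞)
    ((1 / 2 ≤ α ∨ Vbar < Lfun α) → ∀ h : ℝ, 1 < h → (massP Vbar α).eval h ≠ 0) := by
  obtain ⟨hα0, hα1⟩ := hα
  intro R c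
  have hc0 : 0 < c := critPoint_pos hα0 hα1
  have hc : α * c ^ 4 = 1 - α := mul_critPoint_pow_four hα0 hα1
  have hc1 : 1 < c ↔ α < 1 / 2 := one_lt_iff_lt_half_of_mul_pow_four hα0 hc hc0
  rw [Lfun_eq_critPoint hα0 hα1]
  refine ⟨fun hhalf hLV => ?_, fun hcase h hh => ?_⟩
  · rcases hLV.eq_or_lt with hEq | hlt
    · exact ⟨c, c, le_rfl, filter_roots_massP_of_eq hα0 hc (hc1.mpr hhalf) hEq.symm,
        hc1.mpr hhalf, le_rfl, le_rfl, fun _ => ⟨rfl, rfl⟩, fun h => absurd hEq h.ne⟩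
    · obtain ⟨hl, hL, hl1, hlc, hcL, hR⟩ :=
        exists_filter_roots_massP_of_lt hα0 hc (hc1.mpr hhalf) hlt hV1
      exact ⟨hl, hL, (hlc.trans hcL).le, hR, hl1, hlc.le, hcL.le, fun h => absurd h hlt.ne',
        fun _ => ⟨hlc, hcL⟩⟩
  · refine (?_ : 0 < (massP Vbar α).eval h).ne'
    rcases hcase with hhalf | hlt
    · exact eval_massP_pos_of_le_one hα0 hc hc0 ((le_iff_le_iff_lt_iff_lt.mpr hc1).mpr hhalf)
        hV1 hh
    · exact eval_massP_pos_of_lt hα0 hc hc0 hlt (one_pos.trans hh)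

theorem stmt6 (Vbar α : ℝ) (hV0 : 0 < Vbar) (hV1 : Vbar < 1) (hα : α ∈ Set.Ioo (0 : ℝ) 1) :
    let R := (massP Vbar α).roots.filter (fun x => 1 < x)
    let c : ℝ := (1 / α - 1) ^ ((1 : ℝ) / 4)
    -- (a): for 0 < α < 1/2 and V̄ ≥ L(α), exactly two zeros in (1,∞), with multiplicity
    (α < 1 / 2 → Lfun α ≤ Vbar →
      ∃ hl hL : ℝ, hl ≤ hL ∧ R = {hl, hL} ∧ 1 < hl ∧ hl ≤ c ∧ c ≤ hL ∧
        (Vbar = Lfun α → hl = c ∧ hL = c) ∧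
        (Lfun α < Vbar → hl < c ∧ c < hL)) ∧
    -- (b): for 1/2 ≤ α < 1, or V̄ < L(α), no zero in (1,∞)
    ((1 / 2 ≤ α ∨ Vbar < Lfun α) → ∀ h : ℝ, 1 < h → (massP Vbar α).eval h ≠ 0) :=
  stmt6_general Vbar α hV1 hα
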